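/- arXiv:1907.00681 — 5 statements merged into one kernel-verified Lean document; each statement's English description precedes it below -/
import Mathlib

section
/- Generalized intermediate value theorem for càdlàg functions: let F : ℝ → ℝ be right-continuous with left limits at every point, let x₀ < x₁ and h ∈ ℝ satisfy (F(x₀) − h)·(F(x₁) − h) < 0. Then there exists x ∈ (x₀, x₁] such that h lies in the closed interval with endpoints F(x⁻) and F(x), where F(x⁻) denotes the left limit of F at x. -/
open Set Filter Topology Function

/-! The crossing point is `x = inf {y ∈ [a, b] | h ≤ F y}`. Right-continuity at `x` gives
`h ≤ F x` (so in particular `x ≠ a`), while every `y ∈ (a, x)` has `F y < h`, so the left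
limit at `x` is at most `h`. The opposite crossing is the same statement in the order dual. -/

section CadlagCrossing

variable {α β : Type*} [ConditionallyCompleteLinearOrder α] [TopologicalSpace α] [OrderTopology α]
  [DenselyOrdered α] [LinearOrder β] [TopologicalSpace β] [OrderClosedTopology β] {F : α → β}

theorem exists_mem_Ioc_leftLim_le_le_apply (hright : ∀ x, ContinuousWithinAt F (Ici x) x)
    (hleft : ∀ x, ∃ l, Tendsto F (𝓝[<] x) (𝓝 l)) {a b : α} {h : β} (hab : a ≤ b)
    (ha : F a < h) (hb : h ≤ F b) : ∃ x ∈ Ioc a b, leftLim F x ≤ h ∧ h ≤ F x := by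
  set T := {y ∈ Icc a b | h ≤ F y}
  have hbT : b ∈ T := ⟨⟨hab, le_rfl⟩, hb⟩
  have hT : BddBelow T := ⟨a, fun y hy => hy.1.1⟩
  set x := sInf T
  have hxb : x ≤ b := csInf_le hT hbT
  have hFx : h ≤ F x :=
    ContinuousWithinAt.closure_le (csInf_mem_closure ⟨b, hbT⟩ hT) continuousWithinAt_const
      ((hright x).mono fun y hy => csInf_le hT hy) fun y hy => hy.2
  have hax : a < x :=
    (le_csInf ⟨b, hbT⟩ fun y hy => hy.1.1).lt_of_ne (ne_of_apply_ne F (ha.trans_le hFx).ne)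
  have hbelow : ∀ᶠ y in 𝓝[<] x, F y ≤ h := by
    filter_upwards [Ioo_mem_nhdsLT hax] with y hy
    by_contra! hhy
    exact (csInf_le hT ⟨⟨hy.1.le, hy.2.le.trans hxb⟩, hhy.le⟩).not_gt hy.2
  have := nhdsLT_neBot_of_exists_lt ⟨a, hax⟩
  obtain ⟨l, hl⟩ := hleft x
  refine ⟨x, ⟨hax, hxb⟩, ?_, hFx⟩
  rw [leftLim_eq_of_tendsto hl]
  exact le_of_tendsto hl hbelow

theorem exists_mem_Ioc_apply_le_le_leftLim (hright : ∀ x, ContinuousWithinAt F (Ici x) x)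
    (hleft : ∀ x, ∃ l, Tendsto F (𝓝[<] x) (𝓝 l)) {a b : α} {h : β} (hab : a ≤ b)
    (ha : h < F a) (hb : F b ≤ h) : ∃ x ∈ Ioc a b, F x ≤ h ∧ h ≤ leftLim F x := by
  obtain ⟨x, hx, hlim, hFx⟩ := exists_mem_Ioc_leftLim_le_le_apply (β := βᵒᵈ) hright hleft hab
    (h := OrderDual.toDual h) ha hb
  exact ⟨x, hx, hFx, hlim⟩

end CadlagCrossing

/-- Generalized intermediate value theorem for càdlàg functions: if `F` is
right-continuous with left limits, `x₀ < x₁` and `(F x₀ − h)(F x₁ − h) < 0`,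
then some `x ∈ (x₀, x₁]` satisfies `h ∈ [min (F x⁻) (F x), max (F x⁻) (F x)]`. -/
theorem stmt_4 (F : ℝ → ℝ)
    (hright : ∀ x : ℝ, ContinuousWithinAt F (Set.Ici x) x)
    (hleft : ∀ x : ℝ, ∃ l : ℝ, Tendsto F (nhdsWithin x (Set.Iio x)) (nhds l))
    (x₀ x₁ h : ℝ) (hx : x₀ < x₁)
    (hsign : (F x₀ - h) * (F x₁ - h) < 0) :
    ∃ x ∈ Set.Ioc x₀ x₁, h ∈ Set.uIcc (Function.leftLim F x) (F x) := by
  rcases mul_neg_iff.1 hsign with ⟨h₀, h₁⟩ | ⟨h₀, h₁⟩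
  · obtain ⟨x, hx, hFx, hlim⟩ := exists_mem_Ioc_apply_le_le_leftLim hright hleft hx.le
      (sub_pos.1 h₀) (sub_neg.1 h₁).le
    exact ⟨x, hx, mem_uIcc.2 (Or.inr ⟨hFx, hlim⟩)⟩
  · obtain ⟨x, hx, hlim, hFx⟩ := exists_mem_Ioc_leftLim_le_le_apply hright hleft hx.le
      (sub_neg.1 h₀) (sub_pos.1 h₁).le
    exact ⟨x, hx, mem_uIcc.2 (Or.inl ⟨hlim, hFx⟩)⟩
end

section
/- Let π be a transport plan on ℝ × ℝ with marginals μ and ν, concentrated on a set S such that no point is simultaneously a nontrivial departure and a nontrivial arrival (if (x,y) ∈ S, (x',y') ∈ S, |y−x| > 0 and |y'−x'| > 0 then y ≠ x'). Then π decomposes as π = π_Δ + π₀ where π_Δ is the image of μ ∧ ν under x ↦ (x,x), and π₀ gives zero mass to the diagonal; moreover the marginals of π₀, namely μ − (μ∧ν) and ν − (μ∧ν), are mutually singular. -/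
/-!
Split `π` into its restrictions to the diagonal `Δ` and to `Δᶜ`. The first has equal marginals
`η`, so `μ = η + μ₀` and `ν = η + ν₀` with `μ₀, ν₀` the marginals of `π₀ = π|Δᶜ`. The hypothesis
on `S` makes the projections of `S \ Δ` disjoint analytic sets; a Borel set separating them
(Lusin) shows `μ₀ ⟂ₘ ν₀`. Adding a common measure to two mutually singular ones, the common part
is exactly the infimum, so `η = μ ⊓ ν`.
-/

open MeasureTheory Set

namespace MeasureTheory.Measure

section Diagonal

variable {α : Type*} [MeasurableSpace α] {ρ : Measure (α × α)}

lemma map_snd_eq_map_fst_of_ae_fst_eq_snd (h : ∀ᵐ z ∂ρ, z.1 = z.2) :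
    ρ.map Prod.snd = ρ.map Prod.fst :=
  map_congr (h.mono fun _ hz => hz.symm)

lemma map_diag_map_fst_of_ae_fst_eq_snd (h : ∀ᵐ z ∂ρ, z.1 = z.2) :
    (ρ.map Prod.fst).map (fun x : α => (x, x)) = ρ := by
  rw [map_map (by fun_prop) measurable_fst]
  conv_rhs => rw [← map_id (μ := ρ)]
  exact map_congr (h.mono fun z hz => Prod.ext rfl hz)

end Diagonal

lemma add_inf_add_of_mutuallySingular {α : Type*} [MeasurableSpace α] (η : Measure α)
    {μ ν : Measure α} (h : μ ⟂ₘ ν) : (η + μ) ⊓ (η + ν) = η := by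
  refine le_antisymm (le_intro fun s hs _ => ?_)
    (le_inf (Measure.le_add_right le_rfl) (Measure.le_add_right le_rfl))
  -- Split `s` along the null set of `μ`, on whose complement `ν` vanishes.
  rw [inf_apply hs]
  refine csInf_le' ⟨h.nullSet, ?_⟩
  simp only [add_apply, measure_inter_null_of_null_left _ h.measure_nullSet,
    measure_inter_null_of_null_left _ h.measure_compl_nullSet, add_zero]
  rw [inter_comm, inter_comm _ s, ← sdiff_eq, measure_inter_add_sdiff s h.measurableSet_nullSet]

lemma mutuallySingular_map_fst_map_snd {α : Type*} [TopologicalSpace α] [PolishSpace α]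
    [MeasurableSpace α] [BorelSpace α] {ρ : Measure (α × α)} {G : Set (α × α)}
    (hG : MeasurableSet G) (hρG : ρ Gᶜ = 0) (hdisj : Disjoint (Prod.fst '' G) (Prod.snd '' G)) :
    ρ.map Prod.fst ⟂ₘ ρ.map Prod.snd := by
  -- Lusin's separation theorem: disjoint analytic sets are separated by a Borel set.
  obtain ⟨T, hAT, hBT, hT⟩ :=
    (hG.analyticSet.image_of_continuous continuous_fst).measurablySeparable
      (hG.analyticSet.image_of_continuous continuous_snd) hdisj
  refine ⟨Tᶜ, hT.compl, ?_, ?_⟩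
  · rw [map_apply measurable_fst hT.compl]
    exact measure_mono_null (fun z hz hzG => hz (hAT (mem_image_of_mem _ hzG))) hρG
  · rw [compl_compl, map_apply measurable_snd hT]
    exact measure_mono_null
      (fun z hz hzG => disjoint_left.1 hBT (mem_image_of_mem Prod.snd hzG) hz) hρG

end MeasureTheory.Measure

open Measure in
theorem stmt_9_general
    (μ ν : Measure ℝ) [IsFiniteMeasure μ]
    (π : Measure (ℝ × ℝ))
    (h1 : π.map Prod.fst = μ) (h2 : π.map Prod.snd = ν)
    (S : Set (ℝ × ℝ)) (hS : MeasurableSet S) (hconc : π Sᶜ = 0)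
    (hnoconnect : ∀ x y x' y' : ℝ, (x, y) ∈ S → (x', y') ∈ S →
      x ≠ y → x' ≠ y' → y ≠ x') :
    ∃ π₀ : Measure (ℝ × ℝ),
      π = Measure.map (fun x : ℝ => (x, x)) (μ ⊓ ν) + π₀ ∧
      π₀ {z : ℝ × ℝ | z.1 = z.2} = 0 ∧
      π₀.map Prod.fst = μ - μ ⊓ ν ∧
      π₀.map Prod.snd = ν - μ ⊓ ν ∧
      (μ - μ ⊓ ν) ⟂ₘ (ν - μ ⊓ ν) := by
  set Δ : Set (ℝ × ℝ) := {z | z.1 = z.2}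
  have hΔ : MeasurableSet Δ := measurableSet_eq_fun measurable_fst measurable_snd
  have hπΔ : ∀ᵐ z ∂π.restrict Δ, z.1 = z.2 := (ae_restrict_iff' hΔ).2 (ae_of_all _ fun _ => id)
  set η := (π.restrict Δ).map Prod.fst
  set π₀ := π.restrict Δᶜ
  have hsplit : π.restrict Δ + π₀ = π := restrict_add_restrict_compl hΔ
  have hμ : μ = η + π₀.map Prod.fst := by rw [← h1, ← hsplit, Measure.map_add _ _ measurable_fst]
  have hν : ν = η + π₀.map Prod.snd := by
    rw [← h2, ← hsplit, Measure.map_add _ _ measurable_snd, map_snd_eq_map_fst_of_ae_fst_eq_snd hπΔ]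
  have hsing : π₀.map Prod.fst ⟂ₘ π₀.map Prod.snd := by
    refine mutuallySingular_map_fst_map_snd (hS.inter hΔ.compl) ?_ ?_
    · rw [restrict_apply (hS.inter hΔ.compl).compl]
      exact measure_mono_null (fun z hz hzS => hz.1 ⟨hzS, hz.2⟩) hconc
    · rw [disjoint_left]
      rintro _ ⟨⟨x, y⟩, ⟨hxy, hxyΔ⟩, rfl⟩ ⟨⟨x', y'⟩, ⟨hxy', hxyΔ'⟩, hy'⟩
      exact hnoconnect x' y' x y hxy' hxy hxyΔ' hxyΔ hy'
  have hinf : μ ⊓ ν = η := by rw [hμ, hν]; exact add_inf_add_of_mutuallySingular η hsing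
  have : IsFiniteMeasure η := isFiniteMeasure_of_le μ (hinf ▸ inf_le_left)
  have hμ₀ : μ - μ ⊓ ν = π₀.map Prod.fst := by rw [hinf, hμ, add_comm, Measure.add_sub_cancel]
  have hν₀ : ν - μ ⊓ ν = π₀.map Prod.snd := by rw [hinf, hν, add_comm, Measure.add_sub_cancel]
  refine ⟨π₀, ?_, ?_, hμ₀.symm, hν₀.symm, hμ₀ ▸ hν₀ ▸ hsing⟩
  · rw [hinf, map_diag_map_fst_of_ae_fst_eq_snd hπΔ, hsplit]
  · simp [π₀, restrict_apply hΔ]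

/-- If a transport plan `π` between `μ` and `ν` is concentrated on a set `S`
whose arches do not connect, then `π = π_Δ + π₀` with
`π_Δ = (id × id)_#(μ ⊓ ν)`, `π₀` vanishing on the diagonal, the marginals of
`π₀` being `μ − μ⊓ν` and `ν − μ⊓ν`, and these marginals mutually singular. -/
theorem stmt_9
    (μ ν : Measure ℝ) [IsFiniteMeasure μ] [IsFiniteMeasure ν]
    (hmass : μ Set.univ = ν Set.univ)
    (π : Measure (ℝ × ℝ)) [IsFiniteMeasure π]
    (h1 : π.map Prod.fst = μ) (h2 : π.map Prod.snd = ν)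
    (S : Set (ℝ × ℝ)) (hS : MeasurableSet S) (hconc : π Sᶜ = 0)
    (hnoconnect : ∀ x y x' y' : ℝ, (x, y) ∈ S → (x', y') ∈ S →
      x ≠ y → x' ≠ y' → y ≠ x') :
    ∃ π₀ : Measure (ℝ × ℝ),
      π = Measure.map (fun x : ℝ => (x, x)) (μ ⊓ ν) + π₀ ∧
      π₀ {z : ℝ × ℝ | z.1 = z.2} = 0 ∧
      π₀.map Prod.fst = μ - μ ⊓ ν ∧
      π₀.map Prod.snd = ν - μ ⊓ ν ∧
      (μ - μ ⊓ ν) ⟂ₘ (ν - μ ⊓ ν) :=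
  stmt_9_general μ ν π h1 h2 S hS hconc hnoconnect
end

section
/- Continuity of the power-cost functional: fix p ∈ (0,1] and probability measures μ, ν on ℝ with finite p-th moment. Then the map T_p : π ↦ ∫∫ |y−x|^p dπ(x,y), defined on the set of transport plans between μ and ν equipped with the topology of weak convergence, is continuous. -/
/-!
Truncating the cost at level `t` gives a bounded continuous function, whose integral is weakly
continuous in the plan. For `p ≤ 1` the cost `|y - x| ^ p` is dominated by `|x| ^ p + |y| ^ p`,
so the truncation error `(|y - x| ^ p - t)⁺` is dominated by `(|x| ^ p - t/2)⁺ + (|y| ^ p - t/2)⁺`,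
whose integral only depends on the marginals. Hence the truncated functionals converge uniformly
on the set of couplings, and the uniform limit is continuous there.
-/

open MeasureTheory Filter Topology

lemma abs_sub_rpow_le_add {p : ℝ} (hp0 : 0 ≤ p) (hp1 : p ≤ 1) (x y : ℝ) :
    |y - x| ^ p ≤ |x| ^ p + |y| ^ p :=
  calc |y - x| ^ p ≤ (|x| + |y|) ^ p :=
        Real.rpow_le_rpow (abs_nonneg _) ((abs_sub y x).trans_eq (add_comm _ _)) hp0
    _ ≤ |x| ^ p + |y| ^ p := Real.rpow_add_le_add_rpow (abs_nonneg x) (abs_nonneg y) hp0 hp1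

lemma max_sub_le_max_sub_half_add {a b c : ℝ} (h : c ≤ a + b) (t : ℝ) :
    max (c - t) 0 ≤ max (a - t / 2) 0 + max (b - t / 2) 0 :=
  max_le (by linarith [le_max_left (a - t / 2) 0, le_max_left (b - t / 2) 0]) (by positivity)

lemma sub_min_eq_max_sub (c t : ℝ) : c - min c t = max (c - t) 0 := by
  rcases le_total c t with h | h
  · rw [min_eq_left h, max_eq_right (by linarith), sub_self]
  · rw [min_eq_right h, max_eq_left (by linarith)]

section Tail

variable {α : Type*} [MeasurableSpace α] {μ : Measure α} {g : α → ℝ}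

lemma tendsto_integral_max_sub_atTop (hg : Integrable g μ) :
    Tendsto (fun t : ℝ => ∫ x, max (g x - t) 0 ∂μ) atTop (𝓝 0) := by
  have hlim := tendsto_integral_filter_of_dominated_convergence (μ := μ) (l := atTop)
    (F := fun (t : ℝ) x => max (g x - t) 0) (f := fun _ => 0) (fun x => |g x|)
    (.of_forall fun _ => by fun_prop) ?_ hg.abs ?_
  · simpa using hlim
  · filter_upwards [eventually_ge_atTop 0] with t ht
    refine .of_forall fun x => ?_
    rw [Real.norm_of_nonneg (le_max_right _ _)]
    exact max_le (by linarith [le_abs_self (g x)]) (abs_nonneg _)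
  · refine .of_forall fun x => tendsto_const_nhds.congr' ?_
    filter_upwards [eventually_ge_atTop (g x)] with t ht
    rw [max_eq_right (by linarith)]

end Tail

section Couplings

variable {X Y : Type*} [MeasurableSpace X] [MeasurableSpace Y]

def couplings (μ : Measure X) (ν : Measure Y) : Set (ProbabilityMeasure (X × Y)) :=
  {π | (π : Measure (X × Y)).map Prod.fst = μ ∧ (π : Measure (X × Y)).map Prod.snd = ν}

variable {μ : Measure X} {ν : Measure Y} {π : Measure (X × Y)} {a : X → ℝ} {b : Y → ℝ}
  {c : X × Y → ℝ}

lemma integrable_of_le_add_of_map_eq (hπμ : π.map Prod.fst = μ) (hπν : π.map Prod.snd = ν)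
    (ha : Integrable a μ) (hb : Integrable b ν) (hcm : AEStronglyMeasurable c π) (hc0 : 0 ≤ c)
    (hcab : ∀ x y, c (x, y) ≤ a x + b y) : Integrable c π := by
  subst hπμ hπν
  refine ((ha.comp_aemeasurable measurable_fst.aemeasurable).add
    (hb.comp_aemeasurable measurable_snd.aemeasurable)).mono' hcm (.of_forall fun z => ?_)
  rw [Real.norm_of_nonneg (hc0 z)]
  exact hcab z.1 z.2

lemma integral_max_sub_le_of_map_eq [IsFiniteMeasure π] (hπμ : π.map Prod.fst = μ)
    (hπν : π.map Prod.snd = ν) (ha : Integrable a μ) (hb : Integrable b ν)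
    (hcab : ∀ x y, c (x, y) ≤ a x + b y) (t : ℝ) :
    ∫ z, max (c z - t) 0 ∂π ≤
      ∫ x, max (a x - t / 2) 0 ∂μ + ∫ y, max (b y - t / 2) 0 ∂ν := by
  subst hπμ hπν
  have haπ : Integrable (fun z : X × Y => a z.1 - t / 2) π :=
    (ha.comp_aemeasurable measurable_fst.aemeasurable).sub (integrable_const _)
  have hbπ : Integrable (fun z : X × Y => b z.2 - t / 2) π :=
    (hb.comp_aemeasurable measurable_snd.aemeasurable).sub (integrable_const _)
  rw [integral_map measurable_fst.aemeasurable (by fun_prop),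
    integral_map measurable_snd.aemeasurable (by fun_prop),
    ← integral_add haπ.pos_part hbπ.pos_part]
  exact integral_mono_of_nonneg (.of_forall fun z => le_max_right _ _)
    (haπ.pos_part.add hbπ.pos_part)
    (.of_forall fun z => max_sub_le_max_sub_half_add (hcab z.1 z.2) t)

theorem continuousOn_integral_couplings_of_le_add [TopologicalSpace X] [TopologicalSpace Y]
    [OpensMeasurableSpace (X × Y)] (ha : Integrable a μ) (hb : Integrable b ν)
    (hc : Continuous c) (hc0 : 0 ≤ c) (hcab : ∀ x y, c (x, y) ≤ a x + b y) :
    ContinuousOn (fun π : ProbabilityMeasure (X × Y) => ∫ z, c z ∂(π : Measure (X × Y)))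
      (couplings μ ν) := by
  let truncation (t : ℝ) : BoundedContinuousFunction (X × Y) ℝ :=
    .ofNormedAddCommGroup (fun z => min (c z) t) (by fun_prop) |t| fun z =>
      abs_le.2 ⟨le_min ((neg_nonpos.2 (abs_nonneg t)).trans (hc0 z)) (neg_abs_le t),
        (min_le_right _ _).trans (le_abs_self t)⟩
  refine TendstoUniformlyOn.continuousOn (p := atTop)
    (F := fun t (π : ProbabilityMeasure (X × Y)) => ∫ z, truncation t z ∂(π : Measure (X × Y)))
    ?_
    (.of_forall fun t =>
      (ProbabilityMeasure.continuous_integral_boundedContinuousFunction _).continuousOn)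
  have htail : Tendsto (fun t : ℝ =>
      ∫ x, max (a x - t / 2) 0 ∂μ + ∫ y, max (b y - t / 2) 0 ∂ν) atTop (𝓝 0) := by
    simpa [Function.comp_def] using ((tendsto_integral_max_sub_atTop ha).add
      (tendsto_integral_max_sub_atTop hb)).comp (tendsto_id.atTop_div_const two_pos)
  rw [Metric.tendstoUniformlyOn_iff]
  intro ε hε
  filter_upwards [htail.eventually_lt_const hε] with t ht π ⟨hπμ, hπν⟩
  have hci := integrable_of_le_add_of_map_eq hπμ hπν ha hb hc.aestronglyMeasurable hc0 hcab
  have hdist : dist (∫ z, c z ∂(π : Measure (X × Y)))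
      (∫ z, truncation t z ∂(π : Measure (X × Y))) = ∫ z, max (c z - t) 0 ∂(π : Measure (X × Y)) := by
    rw [Real.dist_eq, ← integral_sub hci ((truncation t).integrable _)]
    simp only [truncation, BoundedContinuousFunction.coe_ofNormedAddCommGroup,
      sub_min_eq_max_sub]
    exact abs_of_nonneg (integral_nonneg fun z => le_max_right _ _)
  rw [hdist]
  exact (integral_max_sub_le_of_map_eq hπμ hπν ha hb hcab t).trans_lt ht

end Couplings

/-- Continuity of the power-cost functional `T_p` on the set of transport
plans between `μ` and `ν` (weak topology), for `p ∈ (0,1]` and marginals with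
finite `p`-th moment. -/
theorem stmt_11 (p : ℝ) (hp0 : 0 < p) (hp1 : p ≤ 1)
    (μ ν : ProbabilityMeasure ℝ)
    (hμ : Integrable (fun x : ℝ => |x| ^ p) (μ : Measure ℝ))
    (hν : Integrable (fun x : ℝ => |x| ^ p) (ν : Measure ℝ)) :
    ContinuousOn
      (fun π : ProbabilityMeasure (ℝ × ℝ) =>
        ∫ z : ℝ × ℝ, |z.2 - z.1| ^ p ∂(π : Measure (ℝ × ℝ)))
      {π : ProbabilityMeasure (ℝ × ℝ) |
        (π : Measure (ℝ × ℝ)).map Prod.fst = (μ : Measure ℝ) ∧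
        (π : Measure (ℝ × ℝ)).map Prod.snd = (ν : Measure ℝ)} :=
  continuousOn_integral_couplings_of_le_add hμ hν
    ((Real.continuous_rpow_const hp0.le).comp (continuous_snd.sub continuous_fst).abs)
    (fun _ => Real.rpow_nonneg (abs_nonneg _) p) (abs_sub_rpow_le_add hp0.le hp1)
end

section
/- Stability of optimizers under limits: let μ, ν ∈ 𝒫₁(ℝ), let p_n → 1 with p_n ∈ (0,1], let π_n be a minimizer of T_{p_n} over Marg(μ,ν), and suppose π_n → π weakly. Then π is a minimizer of T₁ over Marg(μ,ν). -/
/-!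
Truncating the cost at height `M`, the interpolation `min c M ≤ c ^ p * M ^ (1 - p)` and the
optimality of `πₙ` give `∫ min c M dπₙ ≤ M ^ (1 - pₙ) ∫ c ^ pₙ dγ` for every coupling `γ`.
The left side is the integral of a bounded continuous function, so it converges to
`∫ min c M dπ` under weak convergence, while the right side converges to `∫ c dγ` by dominated
convergence (`c ^ p ≤ 1 + c`). Letting `M → ∞` gives `∫ c dπ ≤ ∫ c dγ`; the marginals of `π` are
those of the `πₙ`, since pushing forward along a continuous map is weakly continuous.
-/

open MeasureTheory Filter BoundedContinuousFunction Topology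

lemma norm_rpow_le_one_add {t q : ℝ} (ht : 0 ≤ t) (hq0 : 0 ≤ q) (hq1 : q ≤ 1) :
    ‖t ^ q‖ ≤ 1 + t := by
  rw [Real.norm_of_nonneg (Real.rpow_nonneg ht q)]
  rcases le_total t 1 with h | h
  · linarith [Real.rpow_le_one ht h hq0]
  · calc t ^ q ≤ t ^ (1 : ℝ) := Real.rpow_le_rpow_of_exponent_le h hq1
      _ ≤ 1 + t := by rw [Real.rpow_one]; linarith

lemma min_le_rpow_mul_rpow {t M q : ℝ} (ht : 0 ≤ t) (hM : 0 ≤ M) (hq0 : 0 ≤ q) (hq1 : q ≤ 1) :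
    min t M ≤ t ^ q * M ^ (1 - q) := by
  have hm : 0 ≤ min t M := le_min ht hM
  calc min t M = min t M ^ q * min t M ^ (1 - q) := by
        rw [← Real.rpow_add' hm (by simp), add_sub_cancel, Real.rpow_one]
    _ ≤ t ^ q * M ^ (1 - q) :=
        mul_le_mul (Real.rpow_le_rpow hm (min_le_left t M) hq0)
          (Real.rpow_le_rpow hm (min_le_right t M) (by linarith))
          (Real.rpow_nonneg hm _) (Real.rpow_nonneg ht _)

section Integrals

variable {α : Type*} [MeasurableSpace α] {μ : Measure α} {f : α → ℝ}

lemma MeasureTheory.Integrable.rpow_const_of_le_one [IsFiniteMeasure μ] (hf : Integrable f μ)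
    (hf0 : 0 ≤ f) {q : ℝ} (hq0 : 0 ≤ q) (hq1 : q ≤ 1) : Integrable (fun x => f x ^ q) μ :=
  ((integrable_const 1).add hf).mono' (hf.aemeasurable.pow_const q).aestronglyMeasurable
    (ae_of_all _ fun x => norm_rpow_le_one_add (hf0 x) hq0 hq1)

lemma tendsto_integral_rpow_of_tendsto_one [IsFiniteMeasure μ] {ι : Type*} {l : Filter ι}
    [l.IsCountablyGenerated] (hf : Integrable f μ) (hf0 : 0 ≤ f) {p : ι → ℝ}
    (hp : ∀ i, 0 ≤ p i ∧ p i ≤ 1) (hplim : Tendsto p l (𝓝 1)) :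
    Tendsto (fun i => ∫ x, f x ^ p i ∂μ) l (𝓝 (∫ x, f x ∂μ)) := by
  refine tendsto_integral_filter_of_dominated_convergence (fun x => 1 + f x)
    (Eventually.of_forall fun i => (hf.rpow_const_of_le_one hf0 (hp i).1 (hp i).2).1)
    (Eventually.of_forall fun i =>
      ae_of_all _ fun x => norm_rpow_le_one_add (hf0 x) (hp i).1 (hp i).2)
    ((integrable_const 1).add hf) (ae_of_all _ fun x => ?_)
  simpa using tendsto_const_nhds.rpow hplim (Or.inr one_pos)

lemma tendsto_integral_min_atTop (hf : Integrable f μ) :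
    Tendsto (fun M : ℝ => ∫ x, min (f x) M ∂μ) atTop (𝓝 (∫ x, f x ∂μ)) := by
  refine tendsto_integral_filter_of_dominated_convergence (fun x => ‖f x‖)
    (Eventually.of_forall fun M => (hf.aemeasurable.min aemeasurable_const).aestronglyMeasurable)
    ((eventually_ge_atTop 0).mono fun M hM => ae_of_all _ fun x => ?_) hf.norm
    (ae_of_all _ fun x => tendsto_const_nhds.congr' ?_)
  · rcases le_total (f x) M with h | h
    · rw [min_eq_left h]
    · rw [min_eq_right h, Real.norm_of_nonneg hM]
      exact h.trans (Real.le_norm_self _)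
  · filter_upwards [eventually_ge_atTop (f x)] with M hM
    rw [min_eq_left hM]

end Integrals

section WeakConvergence

variable {X ι : Type*} [TopologicalSpace X] [MeasurableSpace X] [OpensMeasurableSpace X]
  {l : Filter ι} [l.NeBot] {πs : ι → ProbabilityMeasure X} {π : ProbabilityMeasure X}

lemma ProbabilityMeasure.map_eq_of_tendsto {Y : Type*} [TopologicalSpace Y] [MeasurableSpace Y]
    [HasOuterApproxClosed Y] [BorelSpace Y] (hlim : Tendsto πs l (𝓝 π)) {f : X → Y}
    (hf : Continuous f) {ρ : ProbabilityMeasure Y} (hmap : ∀ i, (πs i : Measure X).map f = ρ) :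
    (π : Measure X).map f = ρ := by
  have hconst : (fun i => (πs i).map hf.measurable.aemeasurable) = fun _ => ρ :=
    funext fun i => ProbabilityMeasure.toMeasure_injective (hmap i)
  have h := ProbabilityMeasure.tendsto_map_of_tendsto_of_continuous πs π hlim hf
  rw [hconst] at h
  exact congrArg ProbabilityMeasure.toMeasure (tendsto_nhds_unique h tendsto_const_nhds)

variable {c : X → ℝ} (hc : Continuous c) (hc0 : 0 ≤ c) (hcπs : ∀ i, Integrable c (πs i))
  {p : ι → ℝ} (hp : ∀ i, 0 ≤ p i ∧ p i ≤ 1) (hplim : Tendsto p l (𝓝 1))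
  {a : ι → ℝ} {B : ℝ} (ha : Tendsto a l (𝓝 B)) (hle : ∀ i, ∫ x, c x ^ p i ∂πs i ≤ a i)
include hc hc0 hcπs hp hplim ha hle

lemma integral_min_le_of_integral_rpow_le (hlim : Tendsto πs l (𝓝 π)) {M : ℝ} (hM : 0 < M) :
    ∫ x, min (c x) M ∂π ≤ B := by
  let cM : X →ᵇ ℝ := ofNormedAddCommGroup (fun x => min (c x) M) (hc.min continuous_const) M
    fun x => by
      rw [Real.norm_of_nonneg (le_min (hc0 x) hM.le)]
      exact min_le_right _ _
  have hlimM : Tendsto (fun i => ∫ x, cM x ∂πs i) l (𝓝 (∫ x, cM x ∂π)) :=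
    ProbabilityMeasure.tendsto_iff_forall_integral_tendsto.mp hlim cM
  have hbound : Tendsto (fun i => M ^ (1 - p i) * a i) l (𝓝 B) := by
    have hexp : Tendsto (fun i => M ^ (1 - p i)) l (𝓝 (M ^ (1 - 1 : ℝ))) :=
      tendsto_const_nhds.rpow (tendsto_const_nhds.sub hplim) (Or.inl hM.ne')
    simpa using hexp.mul ha
  refine le_of_tendsto_of_tendsto' hlimM hbound fun i => ?_
  calc ∫ x, min (c x) M ∂πs i
      ≤ ∫ x, c x ^ p i * M ^ (1 - p i) ∂πs i :=
        integral_mono (cM.integrable _)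
          (((hcπs i).rpow_const_of_le_one hc0 (hp i).1 (hp i).2).mul_const _)
          fun x => min_le_rpow_mul_rpow (hc0 x) hM.le (hp i).1 (hp i).2
    _ = M ^ (1 - p i) * ∫ x, c x ^ p i ∂πs i := by rw [integral_mul_const, mul_comm]
    _ ≤ M ^ (1 - p i) * a i := mul_le_mul_of_nonneg_left (hle i) (Real.rpow_nonneg hM.le _)

lemma integral_le_of_integral_rpow_le (hlim : Tendsto πs l (𝓝 π)) (hcπ : Integrable c π) :
    ∫ x, c x ∂π ≤ B :=
  le_of_tendsto (tendsto_integral_min_atTop hcπ) <| (eventually_gt_atTop 0).mono fun _ hM =>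
    integral_min_le_of_integral_rpow_le hc hc0 hcπs hp hplim ha hle hlim hM

end WeakConvergence

lemma integrable_abs_sub_of_map_eq {θ : Measure (ℝ × ℝ)} {μ ν : Measure ℝ}
    (hμ : Integrable (fun x => |x|) μ) (hν : Integrable (fun x => |x|) ν)
    (h1 : θ.map Prod.fst = μ) (h2 : θ.map Prod.snd = ν) :
    Integrable (fun z : ℝ × ℝ => |z.2 - z.1|) θ := by
  subst h1 h2
  have hfst := (integrable_map_measure hμ.1 measurable_fst.aemeasurable).mp hμ
  have hsnd := (integrable_map_measure hν.1 measurable_snd.aemeasurable).mp hν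
  refine (hsnd.add hfst).mono' (continuous_snd.sub continuous_fst).abs.aestronglyMeasurable
    (ae_of_all _ fun z => ?_)
  simpa only [Real.norm_eq_abs, abs_abs, Pi.add_apply, Function.comp_apply] using abs_sub z.2 z.1

/-- Stability of optimizers: if `p_n → 1`, `π_n` minimizes `T_{p_n}` over
`Marg(μ,ν)` and `π_n → π` weakly, then `π` minimizes `T₁` over `Marg(μ,ν)`. -/
theorem stmt_15 (μ ν : ProbabilityMeasure ℝ)
    (hμ : Integrable (fun x : ℝ => |x|) (μ : Measure ℝ))
    (hν : Integrable (fun x : ℝ => |x|) (ν : Measure ℝ))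
    (p : ℕ → ℝ) (hp : ∀ n, 0 < p n ∧ p n ≤ 1) (hplim : Tendsto p atTop (nhds 1))
    (πs : ℕ → ProbabilityMeasure (ℝ × ℝ))
    (hmarg : ∀ n, ((πs n : Measure (ℝ × ℝ)).map Prod.fst = (μ : Measure ℝ) ∧
      (πs n : Measure (ℝ × ℝ)).map Prod.snd = (ν : Measure ℝ)))
    (hopt : ∀ n, ∀ γ : ProbabilityMeasure (ℝ × ℝ),
      (γ : Measure (ℝ × ℝ)).map Prod.fst = (μ : Measure ℝ) →
      (γ : Measure (ℝ × ℝ)).map Prod.snd = (ν : Measure ℝ) →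
      ∫ z : ℝ × ℝ, |z.2 - z.1| ^ (p n) ∂(πs n : Measure (ℝ × ℝ)) ≤
      ∫ z : ℝ × ℝ, |z.2 - z.1| ^ (p n) ∂(γ : Measure (ℝ × ℝ)))
    (π : ProbabilityMeasure (ℝ × ℝ)) (hlim : Tendsto πs atTop (nhds π)) :
    (π : Measure (ℝ × ℝ)).map Prod.fst = (μ : Measure ℝ) ∧
    (π : Measure (ℝ × ℝ)).map Prod.snd = (ν : Measure ℝ) ∧
    ∀ γ : ProbabilityMeasure (ℝ × ℝ),
      (γ : Measure (ℝ × ℝ)).map Prod.fst = (μ : Measure ℝ) →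
      (γ : Measure (ℝ × ℝ)).map Prod.snd = (ν : Measure ℝ) →
      ∫ z : ℝ × ℝ, |z.2 - z.1| ∂(π : Measure (ℝ × ℝ)) ≤
      ∫ z : ℝ × ℝ, |z.2 - z.1| ∂(γ : Measure (ℝ × ℝ)) := by
  have h1 := ProbabilityMeasure.map_eq_of_tendsto hlim continuous_fst fun n => (hmarg n).1
  have h2 := ProbabilityMeasure.map_eq_of_tendsto hlim continuous_snd fun n => (hmarg n).2
  refine ⟨h1, h2, fun γ hγ1 hγ2 => ?_⟩
  have hcost_nonneg : 0 ≤ fun z : ℝ × ℝ => |z.2 - z.1| := fun z => abs_nonneg _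
  have hp' : ∀ n, 0 ≤ p n ∧ p n ≤ 1 := fun n => ⟨(hp n).1.le, (hp n).2⟩
  exact integral_le_of_integral_rpow_le (continuous_snd.sub continuous_fst).abs hcost_nonneg
    (fun n => integrable_abs_sub_of_map_eq hμ hν (hmarg n).1 (hmarg n).2) hp' hplim
    (tendsto_integral_rpow_of_tendsto_one (integrable_abs_sub_of_map_eq hμ hν hγ1 hγ2)
      hcost_nonneg hp' hplim)
    (fun n => hopt n γ hγ1 hγ2) hlim (integrable_abs_sub_of_map_eq hμ hν h1 h2)
end

section
/- Splitting of total variation for singular differences: let μ ⊥ ν be mutually singular finite Borel measures on ℝ with cumulative distribution functions F_μ, F_ν, and let F_σ = F_μ − F_ν. Then the positive variation of F_σ over ℝ equals μ(ℝ) and the negative variation equals ν(ℝ); in particular the total variation of F_σ over ℝ equals μ(ℝ) + ν(ℝ). -/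
open MeasureTheory
open scoped ENNReal

/-- Positive variation over `ℝ` of `F`, as a supremum over finite strictly
increasing partitions of the sums of positive parts of increments. -/
noncomputable def posVar (F : ℝ → ℝ) : ℝ≥0∞ :=
  ⨆ (n : ℕ) (r : Fin (n + 1) → ℝ) (_ : StrictMono r),
    ∑ k : Fin n, ENNReal.ofReal (F (r k.succ) - F (r k.castSucc))

/-- Negative variation over `ℝ`. -/
noncomputable def negVar (F : ℝ → ℝ) : ℝ≥0∞ :=
  ⨆ (n : ℕ) (r : Fin (n + 1) → ℝ) (_ : StrictMono r),
    ∑ k : Fin n, ENNReal.ofReal (F (r k.castSucc) - F (r k.succ))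

/-! On a partition interval `(a, b]` the increment of `F_σ` is `μ (a, b] - ν (a, b]`, so its
positive part is at most `μ (a, b]`; disjointness of the intervals bounds the positive variation by `μ ℝ`.
Conversely, if `μ` lives on `sᶜ` and `ν sᶜ = 0`, inner regularity gives a compact `K ⊆ sᶜ` carrying
almost all of `μ`, with `ν K = 0`, and outer regularity an open `U ⊇ K` of small `ν`-measure. The
intervals of a fine enough uniform partition that meet `K` cover `K` and lie in `U`, so the positive
parts of their increments add up to at least `μ K - ν U`. The negative variation of `F_σ` is the
positive variation of `F_ν - F_μ`. -/

open Set Function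

theorem sum_le_posVar (F : ℝ → ℝ) {n : ℕ} {r : Fin (n + 1) → ℝ} (hr : StrictMono r) :
    ∑ k : Fin n, ENNReal.ofReal (F (r k.succ) - F (r k.castSucc)) ≤ posVar F :=
  le_iSup₂_of_le n r (le_iSup_of_le hr le_rfl)

theorem negVar_eq_posVar_neg (F : ℝ → ℝ) : negVar F = posVar (-F) := by
  simp only [negVar, posVar, Pi.neg_apply, neg_sub_neg]

theorem Monotone.pairwise_disjoint_on_Ioc_castSucc_succ {α : Type*} [Preorder α] {n : ℕ}
    {r : Fin (n + 1) → α} (hr : Monotone r) :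
    Pairwise (Disjoint on fun k : Fin n => Ioc (r k.castSucc) (r k.succ)) :=
  (pairwise_disjoint_on _).2 fun _ _ hkl =>
    disjoint_iff_inf_le.mpr fun _ ⟨⟨_, h₁⟩, ⟨h₂, _⟩⟩ =>
      h₂.not_ge <| h₁.trans <| hr (Fin.succ_le_castSucc_iff.2 hkl)

theorem Fin.exists_mem_Ioc_castSucc_succ {α : Type*} [LinearOrder α] {n : ℕ}
    (r : Fin (n + 1) → α) {x : α} (hx : x ∈ Ioc (r 0) (r (Fin.last n))) :
    ∃ k : Fin n, x ∈ Ioc (r k.castSucc) (r k.succ) := by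
  induction n with
  | zero => exact absurd (hx.1.trans_le hx.2) (lt_irrefl _)
  | succ n ih =>
    by_cases h : x ≤ r (Fin.last n).castSucc
    · obtain ⟨k, hk⟩ := ih (fun i => r i.castSucc) ⟨by simpa using hx.1, h⟩
      exact ⟨k.castSucc, hk.1, by simpa [← Fin.succ_castSucc] using hk.2⟩
    · exact ⟨Fin.last n, lt_of_not_ge h, by simpa [Fin.succ_last] using hx.2⟩

theorem exists_strictMono_fin_mesh_lt {a b δ : ℝ} (hab : a < b) (hδ : 0 < δ) :
    ∃ (n : ℕ) (r : Fin (n + 1) → ℝ), StrictMono r ∧ r 0 = a ∧ r (Fin.last n) = b ∧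
      ∀ k : Fin n, r k.succ - r k.castSucc < δ := by
  obtain ⟨n, hn⟩ := exists_nat_gt ((b - a) / δ)
  have hn0 : (0 : ℝ) < n := (div_pos (sub_pos.2 hab) hδ).trans hn
  have hstep : 0 < (b - a) / n := div_pos (sub_pos.2 hab) hn0
  refine ⟨n, fun k => a + k * ((b - a) / n), fun k l hkl => ?_, by simp, ?_, fun k => ?_⟩
  · have : (k : ℝ) < l := by exact_mod_cast hkl
    simp only
    gcongr
  · simp only [Fin.val_last]
    field_simp
    ring
  · simp only [Fin.val_succ, Fin.val_castSucc, Nat.cast_add, Nat.cast_one]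
    rw [div_lt_iff₀ hδ] at hn
    rw [add_sub_add_left_eq_sub, ← sub_mul, add_sub_cancel_left, one_mul, div_lt_iff₀ hn0]
    linarith

theorem IsCompact.exists_fin_partition_cover_subset {K U : Set ℝ} (hK : IsCompact K)
    (hU : IsOpen U) (hKU : K ⊆ U) :
    ∃ (n : ℕ) (r : Fin (n + 1) → ℝ) (S : Finset (Fin n)), StrictMono r ∧
      K ⊆ ⋃ k ∈ S, Ioc (r k.castSucc) (r k.succ) ∧ ∀ k ∈ S, Ioc (r k.castSucc) (r k.succ) ⊆ U := by
  classical
  obtain ⟨δ, hδ, hthick⟩ := hK.exists_thickening_subset_open hU hKU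
  obtain ⟨a, ha⟩ := hK.bddBelow
  obtain ⟨b, hb⟩ := hK.bddAbove
  obtain ⟨n, r, hr, hr0, hrn, hmesh⟩ :=
    exists_strictMono_fin_mesh_lt (sub_one_lt a |>.trans_le (le_max_left a b)) hδ
  refine ⟨n, r, Finset.univ.filter fun k => (Ioc (r k.castSucc) (r k.succ) ∩ K).Nonempty, hr,
    fun x hx => ?_, ?_⟩
  · obtain ⟨k, hk⟩ := Fin.exists_mem_Ioc_castSucc_succ r
      (x := x) ⟨hr0 ▸ (sub_one_lt a).trans_le (ha hx), hrn ▸ (hb hx).trans (le_max_right a b)⟩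
    exact mem_biUnion (Finset.mem_filter.2 ⟨Finset.mem_univ k, x, hk, hx⟩) hk
  · intro k hk y hy
    obtain ⟨z, hzI, hzK⟩ := (Finset.mem_filter.1 hk).2
    refine hthick (Metric.mem_thickening_iff.2 ⟨z, hzK, ?_⟩)
    rw [Real.dist_eq, abs_lt]
    have := hmesh k
    constructor <;> linarith [hy.1, hy.2, hzI.1, hzI.2]

theorem MeasureTheory.measure_tsub_le_sum_tsub {α ι : Type*} [MeasurableSpace α]
    {μ ν : Measure α} {S : Finset ι} {I : ι → Set α} (hd : (S : Set ι).PairwiseDisjoint I)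
    (hm : ∀ i ∈ S, MeasurableSet (I i)) {K U : Set α} (hK : K ⊆ ⋃ i ∈ S, I i)
    (hU : ∀ i ∈ S, I i ⊆ U) :
    μ K - ν U ≤ ∑ i ∈ S, (μ (I i) - ν (I i)) := by
  have hμ : μ K ≤ ∑ i ∈ S, μ (I i) := (measure_mono hK).trans (measure_biUnion_finset_le S I)
  have hν : ∑ i ∈ S, ν (I i) ≤ ν U := by
    rw [← measure_biUnion_finset hd hm]
    exact measure_mono (iUnion₂_subset hU)
  calc μ K - ν U ≤ ∑ i ∈ S, μ (I i) - ∑ i ∈ S, ν (I i) := tsub_le_tsub hμ hν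
    _ ≤ ∑ i ∈ S, (μ (I i) - ν (I i)) := by
      rw [tsub_le_iff_right, ← Finset.sum_add_distrib]
      exact Finset.sum_le_sum fun i _ => le_tsub_add

namespace MeasureTheory

variable (μ ν : Measure ℝ) [IsFiniteMeasure μ] [IsFiniteMeasure ν]

theorem measureReal_Iic_sub_measureReal_Iic {a b : ℝ} (hab : a ≤ b) :
    μ.real (Iic b) - μ.real (Iic a) = μ.real (Ioc a b) := by
  rw [← Iic_union_Ioc_eq_Iic hab, measureReal_union (Iic_disjoint_Ioc le_rfl) measurableSet_Ioc,
    add_sub_cancel_left]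

theorem ofReal_cdf_sub_increment {a b : ℝ} (hab : a ≤ b) :
    ENNReal.ofReal ((μ.real (Iic b) - ν.real (Iic b)) - (μ.real (Iic a) - ν.real (Iic a))) =
      μ (Ioc a b) - ν (Ioc a b) := by
  rw [sub_sub_sub_comm, measureReal_Iic_sub_measureReal_Iic μ hab,
    measureReal_Iic_sub_measureReal_Iic ν hab, ENNReal.ofReal_sub _ measureReal_nonneg,
    ofReal_measureReal, ofReal_measureReal]

theorem posVar_cdf_sub_le :
    posVar (fun x => μ.real (Iic x) - ν.real (Iic x)) ≤ μ univ := by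
  refine iSup_le fun n => iSup₂_le fun r hr => ?_
  calc _ = ∑ k : Fin n, (μ (Ioc (r k.castSucc) (r k.succ)) - ν (Ioc (r k.castSucc) (r k.succ))) :=
        Finset.sum_congr rfl fun k _ =>
          ofReal_cdf_sub_increment μ ν (hr.monotone k.castSucc_le_succ)
    _ ≤ ∑ k : Fin n, μ (Ioc (r k.castSucc) (r k.succ)) :=
        Finset.sum_le_sum fun _ _ => tsub_le_self
    _ ≤ μ univ := sum_measure_le_measure_univ (fun _ _ => measurableSet_Ioc.nullMeasurableSet)
        fun k _ l _ hkl => (hr.monotone.pairwise_disjoint_on_Ioc_castSucc_succ hkl).aedisjoint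

theorem measure_tsub_le_posVar_cdf_sub {K U : Set ℝ} (hK : IsCompact K) (hU : IsOpen U)
    (hKU : K ⊆ U) : μ K - ν U ≤ posVar (fun x => μ.real (Iic x) - ν.real (Iic x)) := by
  obtain ⟨n, r, S, hr, hKS, hSU⟩ := hK.exists_fin_partition_cover_subset hU hKU
  calc μ K - ν U
      ≤ ∑ k ∈ S, (μ (Ioc (r k.castSucc) (r k.succ)) - ν (Ioc (r k.castSucc) (r k.succ))) :=
        measure_tsub_le_sum_tsub (hr.monotone.pairwise_disjoint_on_Ioc_castSucc_succ.set_pairwise _)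
          (fun _ _ => measurableSet_Ioc) hKS hSU
    _ ≤ ∑ k : Fin n, (μ (Ioc (r k.castSucc) (r k.succ)) - ν (Ioc (r k.castSucc) (r k.succ))) :=
        Finset.sum_le_sum_of_subset S.subset_univ
    _ = ∑ k : Fin n, ENNReal.ofReal ((μ.real (Iic (r k.succ)) - ν.real (Iic (r k.succ))) -
          (μ.real (Iic (r k.castSucc)) - ν.real (Iic (r k.castSucc)))) :=
        Finset.sum_congr rfl fun k _ =>
          (ofReal_cdf_sub_increment μ ν (hr.monotone k.castSucc_le_succ)).symm
    _ ≤ _ := sum_le_posVar (fun x => μ.real (Iic x) - ν.real (Iic x)) hr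

theorem measure_le_posVar_cdf_sub_of_isCompact {K : Set ℝ} (hK : IsCompact K) (hνK : ν K = 0) :
    μ K ≤ posVar (fun x => μ.real (Iic x) - ν.real (Iic x)) := by
  refine ENNReal.le_of_forall_pos_le_add fun ε hε _ => ?_
  obtain ⟨U, hKU, hU, hνU⟩ :=
    K.exists_isOpen_lt_add (μ := ν) (measure_ne_top ν K) (ENNReal.coe_ne_zero.2 hε.ne')
  rw [hνK, zero_add] at hνU
  calc μ K ≤ μ K - ν U + ν U := le_tsub_add
    _ ≤ _ := add_le_add (measure_tsub_le_posVar_cdf_sub μ ν hK hU hKU) hνU.le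

theorem posVar_cdf_sub_of_mutuallySingular (hμν : μ ⟂ₘ ν) :
    posVar (fun x => μ.real (Iic x) - ν.real (Iic x)) = μ univ := by
  refine le_antisymm (posVar_cdf_sub_le μ ν) ?_
  obtain ⟨s, hs, hμs, hνs⟩ := hμν
  rw [← measure_add_measure_compl hs, hμs, zero_add, hs.compl.measure_eq_iSup_isCompact]
  exact iSup₂_le fun K hKs => iSup_le fun hK =>
    measure_le_posVar_cdf_sub_of_isCompact μ ν hK (measure_mono_null hKs hνs)

end MeasureTheory

/-- For mutually singular finite measures `μ ⊥ ν` on `ℝ` with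
`F_σ = F_μ − F_ν`, the positive variation of `F_σ` over `ℝ` is `μ(ℝ)`, the
negative variation is `ν(ℝ)`, and the total variation is `μ(ℝ) + ν(ℝ)`. -/
theorem stmt_18 (μ ν : Measure ℝ) [IsFiniteMeasure μ] [IsFiniteMeasure ν]
    (hsing : μ ⟂ₘ ν)
    (Fσ : ℝ → ℝ)
    (hF : Fσ = fun x : ℝ => (μ (Set.Iic x)).toReal - (ν (Set.Iic x)).toReal) :
    posVar Fσ = μ Set.univ ∧ negVar Fσ = ν Set.univ ∧
    posVar Fσ + negVar Fσ = μ Set.univ + ν Set.univ := by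
  have hpos : posVar Fσ = μ univ := hF ▸ posVar_cdf_sub_of_mutuallySingular μ ν hsing
  have hneg : negVar Fσ = ν univ := by
    rw [negVar_eq_posVar_neg, hF, ← posVar_cdf_sub_of_mutuallySingular ν μ hsing.symm]
    congr 1
    ext x
    exact neg_sub _ _
  exact ⟨hpos, hneg, by rw [hpos, hneg]⟩
end
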